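/- Let (L, ℓ) be a Lie algebra in an additive symmetric ribbon category whose Killing form κ is non-degenerate (i.e. admits a copairing κ⁻ : 1 → L ⊗ L side-inverse to κ). Then the only Abelian retract ideal of L is 0: if (K, e, r) is a retract ideal with r ∘ ℓ ∘ (e ⊗ e) = 0, then e = 0. -/

import Mathlib

open CategoryTheory MonoidalCategory

variable {C : Type*} [Category C] [MonoidalCategory C] [Preadditive C]
  [SymmetricCategory C] [MonoidalPreadditive C] [RigidCategory C]

/-- The sovereign structure `σ_U : U^∨ ⟶ ^∨U` induced by a twist `θ`. -/
def sovereignOfTwist (θ : ∀ X : C, X ⟶ X) (U : C) : Uᘁ ⟶ ᘁU :=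
  (ρ_ (Uᘁ)).inv ≫ ((Uᘁ) ◁ η_ (ᘁU) U) ≫ (α_ (Uᘁ) (ᘁU) U).inv
    ≫ ((β_ (ᘁU) (Uᘁ)).inv ▷ U) ≫ (α_ (ᘁU) (Uᘁ) U).hom
    ≫ ((ᘁU) ◁ ((Uᘁ) ◁ θ U)) ≫ ((ᘁU) ◁ ε_ U (Uᘁ)) ≫ (ρ_ (ᘁU)).hom

/-- Partial trace over the last tensor factor of `f : X ⊗ V ⟶ V`. -/
def partialTrace (θ : ∀ X : C, X ⟶ X) {X V : C} (f : X ⊗ V ⟶ V) : X ⟶ 𝟙_ C :=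
  (ρ_ X).inv ≫ (X ◁ η_ V (Vᘁ)) ≫ (α_ X V (Vᘁ)).inv ≫ (f ▷ (Vᘁ))
    ≫ (V ◁ sovereignOfTwist θ V) ≫ ε_ (ᘁV) V

/-- The Killing form `κ := tr₃(θ_L ∘ ℓ ∘ (id_L ⊗ ℓ)) : L ⊗ L ⟶ 𝟙` of a Lie algebra
`(L, ℓ)` in a symmetric ribbon category. -/
def catKillingForm (θ : ∀ X : C, X ⟶ X) {L : C} (ℓ : L ⊗ L ⟶ L) : L ⊗ L ⟶ 𝟙_ C :=
  partialTrace θ ((α_ L L L).hom ≫ (L ◁ ℓ) ≫ ℓ ≫ θ L)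

/-!
The Killing form restricted to `K ⊗ L` is `κ(k, y) = tr(θ ∘ ad k ∘ ad y)`. Since `K` is an ideal,
`ad k ∘ ad y` takes values in `K`, so by cyclicity of the trace it may be traced over `K` instead;
there `ad y` maps `K` into `K` and `ad k` kills `K` because `K` is Abelian. Hence `κ(e ⊗ 1) = 0`,
and non-degeneracy forces `e = 0`.
-/

open BraidedCategory

section TwistedTrace

omit [Preadditive C] [MonoidalPreadditive C]

lemma whiskerLeft_coevaluation_comp_braiding_inv_whiskerRight (V : C) :
    (ρ_ (Vᘁ)).inv ≫ ((Vᘁ) ◁ η_ (ᘁV) V) ≫ (α_ (Vᘁ) (ᘁV) V).inv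
      ≫ ((β_ (ᘁV) (Vᘁ)).inv ▷ V)
    = (λ_ (Vᘁ)).inv ≫ (η_ (ᘁV) V ▷ (Vᘁ)) ≫ (α_ (ᘁV) V (Vᘁ)).hom
      ≫ ((ᘁV) ◁ (β_ V (Vᘁ)).hom) ≫ (α_ (ᘁV) (Vᘁ) V).inv := by
  rw [show (β_ (ᘁV) (Vᘁ)).inv = (β_ (Vᘁ) (ᘁV)).hom by
    simp [SymmetricCategory.braiding_swap_eq_inv_braiding]]
  rw [show ((ᘁV) ◁ (β_ V (Vᘁ)).hom) = ((ᘁV) ◁ (β_ (Vᘁ) V).inv) by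
    simp [SymmetricCategory.braiding_swap_eq_inv_braiding]]
  have h := braiding_naturality_right (Vᘁ) (η_ (ᘁV) V)
  rw [braiding_tensor_right_hom] at h
  rw [← cancel_mono ((α_ (ᘁV) (Vᘁ) V).hom ≫ ((ᘁV) ◁ (β_ (Vᘁ) V).hom) ≫ (α_ (ᘁV) V (Vᘁ)).inv)]
  simp only [Category.assoc, Iso.inv_hom_id_assoc]
  slice_rhs 4 5 => rw [← whiskerLeft_comp, Iso.inv_hom_id, whiskerLeft_id]
  rw [h]
  simp

lemma whiskerLeft_sovereignOfTwist_comp_evaluation (θ : ∀ X : C, X ⟶ X) (V : C) :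
    (V ◁ sovereignOfTwist θ V) ≫ ε_ (ᘁV) V
      = (θ V ▷ (Vᘁ)) ≫ (β_ V (Vᘁ)).hom ≫ ε_ V (Vᘁ) := by
  rw [sovereignOfTwist, reassoc_of% (whiskerLeft_coevaluation_comp_braiding_inv_whiskerRight V)]
  calc
    _ = 𝟙 _ ⊗≫ V ◁ (η_ (ᘁV) V ▷ (Vᘁ))
        ⊗≫ (((V ⊗ ᘁV) ◁ ((β_ V (Vᘁ)).hom ≫ ((Vᘁ) ◁ θ V) ≫ ε_ V (Vᘁ)))
          ≫ (ε_ (ᘁV) V ▷ 𝟙_ C)) ⊗≫ 𝟙 _ := by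
      monoidal
    _ = 𝟙 _ ⊗≫ V ◁ (η_ (ᘁV) V ▷ (Vᘁ))
        ⊗≫ ((ε_ (ᘁV) V ▷ (V ⊗ Vᘁ))
          ≫ (𝟙_ C ◁ ((β_ V (Vᘁ)).hom ≫ ((Vᘁ) ◁ θ V) ≫ ε_ V (Vᘁ)))) ⊗≫ 𝟙 _ := by
      rw [whisker_exchange]
    _ = 𝟙 _ ⊗≫ (((V ◁ η_ (ᘁV : C) V) ≫ (α_ V (ᘁV : C) V).inv ≫ (ε_ (ᘁV : C) V ▷ V)) ▷ (Vᘁ))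
        ⊗≫ ((β_ V (Vᘁ)).hom ≫ ((Vᘁ) ◁ θ V) ≫ ε_ V (Vᘁ)) := by
      monoidal
    _ = _ := by
      rw [ExactPairing.coevaluation_evaluation, ← braiding_naturality_left_assoc]
      monoidal

variable (θ : ∀ X : C, X ⟶ X)

lemma partialTrace_eq {X V : C} (f : X ⊗ V ⟶ V) :
    partialTrace θ f = (ρ_ X).inv ≫ (X ◁ η_ V (Vᘁ)) ≫ (α_ X V (Vᘁ)).inv
      ≫ ((f ≫ θ V) ▷ (Vᘁ)) ≫ (β_ V (Vᘁ)).hom ≫ ε_ V (Vᘁ) := by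
  rw [partialTrace, whiskerLeft_sovereignOfTwist_comp_evaluation]
  simp

lemma partialTrace_whiskerRight_comp {X' X V : C} (g : X' ⟶ X) (f : X ⊗ V ⟶ V) :
    partialTrace θ ((g ▷ V) ≫ f) = g ≫ partialTrace θ f := by
  rw [partialTrace_eq, partialTrace_eq, rightUnitor_inv_naturality_assoc g,
    ← whisker_exchange_assoc, associator_inv_naturality_left_assoc]
  simp

lemma partialTrace_comp_eq_partialTrace_whiskerLeft_comp
    (hθnat : ∀ {X Y : C} (g : X ⟶ Y), g ≫ θ Y = θ X ≫ g)
    {X W V : C} (u : W ⟶ V) (f : X ⊗ V ⟶ W) :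
    partialTrace θ (f ≫ u) = partialTrace θ ((X ◁ u) ≫ f) := by
  rw [partialTrace_eq, partialTrace_eq]
  calc
    _ = 𝟙 _ ⊗≫ (X ◁ η_ V (Vᘁ)) ⊗≫ ((f ≫ θ W) ▷ (Vᘁ))
          ≫ ((u ▷ (Vᘁ)) ≫ (β_ V (Vᘁ)).hom) ≫ ε_ V (Vᘁ) := by
        simp only [Category.assoc, hθnat u]
        monoidal
    _ = 𝟙 _ ⊗≫ (X ◁ η_ V (Vᘁ)) ⊗≫ ((f ≫ θ W) ▷ (Vᘁ))
          ≫ (β_ W (Vᘁ)).hom ≫ (((uᘁ) ▷ W) ≫ ε_ W (Wᘁ)) := by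
        rw [braiding_naturality_left, rightAdjointMate_comp_evaluation]
        monoidal
    _ = 𝟙 _ ⊗≫ (X ◁ η_ V (Vᘁ)) ⊗≫ (((f ≫ θ W) ▷ (Vᘁ))
          ≫ (W ◁ (uᘁ))) ≫ (β_ W (Wᘁ)).hom ≫ ε_ W (Wᘁ) := by
        rw [← braiding_naturality_right_assoc]
        monoidal
    _ = 𝟙 _ ⊗≫ (X ◁ (η_ V (Vᘁ) ≫ (V ◁ (uᘁ)))) ⊗≫ ((f ≫ θ W) ▷ (Wᘁ))
          ≫ (β_ W (Wᘁ)).hom ≫ ε_ W (Wᘁ) := by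
        rw [← whisker_exchange]
        monoidal
    _ = 𝟙 _ ⊗≫ (X ◁ (η_ W (Wᘁ) ≫ (u ▷ (Wᘁ)))) ⊗≫ ((f ≫ θ W) ▷ (Wᘁ))
          ≫ (β_ W (Wᘁ)).hom ≫ ε_ W (Wᘁ) := by
        rw [coevaluation_comp_rightAdjointMate]
    _ = _ := by
        monoidal

end TwistedTrace

lemma partialTrace_zero (θ : ∀ X : C, X ⟶ X) {X V : C} : partialTrace θ (0 : X ⊗ V ⟶ V) = 0 := by
  simp [partialTrace_eq]

omit [SymmetricCategory C] [RigidCategory C] in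
lemma eq_zero_of_whiskerRight_comp_eq_zero {L K : C} {κ : L ⊗ L ⟶ 𝟙_ C} {κinv : 𝟙_ C ⟶ L ⊗ L}
    (hnd : (ρ_ L).inv ≫ (L ◁ κinv) ≫ (α_ L L L).inv ≫ (κ ▷ L) ≫ (λ_ L).hom = 𝟙 L)
    {e : K ⟶ L} (he : (e ▷ L) ≫ κ = 0) : e = 0 := by
  rw [← Category.comp_id e, ← hnd, rightUnitor_inv_naturality_assoc, ← whisker_exchange_assoc,
    associator_inv_naturality_left_assoc, ← comp_whiskerRight_assoc, he]
  simp

section LieIdeal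

variable {L K : C} {ℓ : L ⊗ L ⟶ L} {e : K ⟶ L} {r : L ⟶ K}

omit [MonoidalPreadditive C] [RigidCategory C] in
lemma whiskerLeft_comp_bracket_of_ideal (hanti : (𝟙 (L ⊗ L) + (β_ L L).hom) ≫ ℓ = 0)
    (hideal : (e ▷ L) ≫ ℓ = (e ▷ L) ≫ ℓ ≫ r ≫ e) :
    (L ◁ e) ≫ ℓ = (L ◁ e) ≫ ℓ ≫ r ≫ e := by
  have hℓ : ℓ = -((β_ L L).hom ≫ ℓ) := by
    rw [Preadditive.add_comp, Category.id_comp] at hanti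
    exact eq_neg_of_add_eq_zero_left hanti
  have hswap : (L ◁ e) ≫ ℓ = -((β_ L K).hom ≫ (e ▷ L) ≫ ℓ) := by
    conv_lhs => rw [hℓ]
    rw [Preadditive.comp_neg, braiding_naturality_right_assoc]
  rw [← Category.assoc (L ◁ e), hswap, Preadditive.neg_comp, Category.assoc, Category.assoc,
    ← hideal]

lemma whiskerRight_comp_catKillingForm_eq_zero (θ : ∀ X : C, X ⟶ X)
    (hθnat : ∀ {X Y : C} (g : X ⟶ Y), g ≫ θ Y = θ X ≫ g)
    (hanti : (𝟙 (L ⊗ L) + (β_ L L).hom) ≫ ℓ = 0)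
    (hideal : (e ▷ L) ≫ ℓ = (e ▷ L) ≫ ℓ ≫ r ≫ e) (habelian : (e ⊗ₘ e) ≫ ℓ ≫ r = 0) :
    (e ▷ L) ≫ catKillingForm θ ℓ = 0 := by
  have hfactor : ((e ▷ L) ▷ L) ≫ (α_ L L L).hom ≫ (L ◁ ℓ) ≫ ℓ ≫ θ L
      = ((α_ K L L).hom ≫ (K ◁ ℓ) ≫ (e ▷ L) ≫ ℓ ≫ r ≫ θ K) ≫ e := by
    rw [associator_naturality_left_assoc, ← whisker_exchange_assoc, reassoc_of% hideal, hθnat e]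
    simp
  have hvanish : ((K ⊗ L) ◁ e) ≫ (α_ K L L).hom ≫ (K ◁ ℓ) ≫ (e ▷ L) ≫ ℓ ≫ r = 0 := by
    rw [associator_naturality_right_assoc, ← whiskerLeft_comp_assoc,
      whiskerLeft_comp_bracket_of_ideal hanti hideal]
    simp only [whiskerLeft_comp, Category.assoc]
    rw [whisker_exchange_assoc, ← tensorHom_def_assoc, habelian]
    simp
  rw [catKillingForm, ← partialTrace_whiskerRight_comp, hfactor,
    partialTrace_comp_eq_partialTrace_whiskerLeft_comp θ hθnat, reassoc_of% hvanish,
    Limits.zero_comp, partialTrace_zero]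

end LieIdeal

theorem nondegenerate_killing_no_abelian_ideal_general (θ : ∀ X : C, X ⟶ X)
    (hθnat : ∀ {X Y : C} (g : X ⟶ Y), g ≫ θ Y = θ X ≫ g)
    (L : C) (ℓ : L ⊗ L ⟶ L)
    (hanti : (𝟙 (L ⊗ L) + (β_ L L).hom) ≫ ℓ = 0)
    (κinv : 𝟙_ C ⟶ L ⊗ L)
    (hnd₁ : (ρ_ L).inv ≫ (L ◁ κinv) ≫ (α_ L L L).inv
        ≫ (catKillingForm θ ℓ ▷ L) ≫ (λ_ L).hom = 𝟙 L)
    (K : C) (e : K ⟶ L) (r : L ⟶ K)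
    (hideal : (e ⊗ₘ 𝟙 L) ≫ ℓ = (e ⊗ₘ 𝟙 L) ≫ ℓ ≫ (r ≫ e))
    (habelian : (e ⊗ₘ e) ≫ ℓ ≫ r = 0) :
    e = 0 := by
  rw [tensorHom_id] at hideal
  exact eq_zero_of_whiskerRight_comp_eq_zero hnd₁
    (whiskerRight_comp_catKillingForm_eq_zero θ hθnat hanti hideal habelian)

/-- If the Killing form `κ` of a Lie algebra `(L, ℓ)` in an additive
symmetric ribbon category is non-degenerate (admits a side-inverse copairing
`κ⁻ : 𝟙 ⟶ L ⊗ L`), then the only Abelian retract ideal of `L` is zero: any retract ideal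
`(K, e, r)` with vanishing induced bracket has `e = 0`. -/
theorem nondegenerate_killing_no_abelian_ideal (θ : ∀ X : C, X ⟶ X)
    (hθiso : ∀ X, IsIso (θ X))
    (hθnat : ∀ {X Y : C} (g : X ⟶ Y), g ≫ θ Y = θ X ≫ g)
    (hθone : θ (𝟙_ C) = 𝟙 (𝟙_ C))
    (hθtensor : ∀ X Y : C, θ (X ⊗ Y) = (β_ X Y).hom ≫ (β_ Y X).hom ≫ (θ X ⊗ₘ θ Y))
    (hθdual : ∀ X : C, θ (Xᘁ) = (θ X)ᘁ)
    (L : C) (ℓ : L ⊗ L ⟶ L)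
    (hanti : (𝟙 (L ⊗ L) + (β_ L L).hom) ≫ ℓ = 0)
    (hjac : (𝟙 (L ⊗ (L ⊗ L)) + ((α_ L L L).inv ≫ (β_ (L ⊗ L) L).hom)
        + ((α_ L L L).inv ≫ (β_ (L ⊗ L) L).hom) ≫ ((α_ L L L).inv ≫ (β_ (L ⊗ L) L).hom))
        ≫ ((L ◁ ℓ) ≫ ℓ) = 0)
    (κinv : 𝟙_ C ⟶ L ⊗ L)
    (hnd₁ : (ρ_ L).inv ≫ (L ◁ κinv) ≫ (α_ L L L).inv
        ≫ (catKillingForm θ ℓ ▷ L) ≫ (λ_ L).hom = 𝟙 L)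
    (hnd₂ : (λ_ L).inv ≫ (κinv ▷ L) ≫ (α_ L L L).hom
        ≫ (L ◁ catKillingForm θ ℓ) ≫ (ρ_ L).hom = 𝟙 L)
    (K : C) (e : K ⟶ L) (r : L ⟶ K) (hre : e ≫ r = 𝟙 K)
    (hideal : (e ⊗ₘ 𝟙 L) ≫ ℓ = (e ⊗ₘ 𝟙 L) ≫ ℓ ≫ (r ≫ e))
    (habelian : (e ⊗ₘ e) ≫ ℓ ≫ r = 0) :
    e = 0 :=
  nondegenerate_killing_no_abelian_ideal_general θ hθnat L ℓ hanti κinv hnd₁ K e r hideal habelian
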